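/- arXiv:2503.01657 — 4 statements merged into one kernel-verified Lean document; each statement's English description precedes it below -/
import Mathlib

section
/- With SE(τ) = sqrt((2/N)(τ²/4 + 2)) (unadjusted) and SE(τ,λ) = sqrt((2/N)((1+λ²)τ² + 8)/(4(1+λ²))) (adjusted), the ratio SE(τ,λ)²/SE(τ)² equals ((1+λ²)τ² + 8)/((1+λ²)(τ² + 8)), which is at most 1 with equality iff λ = 0, and tends to τ²/(τ²+8) as |λ| → ∞. -/
/-- The ratio SE(τ,λ)²/SE(τ)² equals ((1+λ²)τ²+8)/((1+λ²)(τ²+8)), is at most 1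
with equality iff λ = 0, and tends to τ²/(τ²+8) as |λ| → ∞. -/
theorem stmt5 (τ l N : ℝ) (hN : 0 < N) :
    (Real.sqrt ((2 / N) * (((1 + l ^ 2) * τ ^ 2 + 8) / (4 * (1 + l ^ 2))))) ^ 2 /
        (Real.sqrt ((2 / N) * (τ ^ 2 / 4 + 2))) ^ 2
      = ((1 + l ^ 2) * τ ^ 2 + 8) / ((1 + l ^ 2) * (τ ^ 2 + 8)) ∧
    ((1 + l ^ 2) * τ ^ 2 + 8) / ((1 + l ^ 2) * (τ ^ 2 + 8)) ≤ 1 ∧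
    (((1 + l ^ 2) * τ ^ 2 + 8) / ((1 + l ^ 2) * (τ ^ 2 + 8)) = 1 ↔ l = 0) ∧
    Filter.Tendsto (fun t : ℝ => ((1 + t ^ 2) * τ ^ 2 + 8) / ((1 + t ^ 2) * (τ ^ 2 + 8)))
      (Filter.comap abs Filter.atTop) (nhds (τ ^ 2 / (τ ^ 2 + 8))) := by
  have ha : (0:ℝ) < 1 + l ^ 2 := by positivity
  have hτ8 : (0:ℝ) < τ ^ 2 + 8 := by positivity
  have hA : (0:ℝ) < (1 + l ^ 2) * τ ^ 2 + 8 := by positivity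
  refine ⟨?_, ?_, ?_, ?_⟩
  · rw [Real.sq_sqrt (by positivity), Real.sq_sqrt (by positivity)]
    field_simp
    ring
  · rw [div_le_one (by positivity)]
    nlinarith [sq_nonneg l, sq_nonneg τ]
  · rw [div_eq_one_iff_eq (by positivity)]
    constructor
    · intro h
      have : l ^ 2 * 8 = 0 := by nlinarith
      have : l ^ 2 = 0 := by linarith
      exact pow_eq_zero_iff (by norm_num) |>.mp this
    · intro h; subst h; ring
  · have hfun : (fun t : ℝ => ((1 + t ^ 2) * τ ^ 2 + 8) / ((1 + t ^ 2) * (τ ^ 2 + 8)))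
        = fun t : ℝ => (τ ^ 2 + 8 * (1 + t ^ 2)⁻¹) / (τ ^ 2 + 8) := by
      funext t
      have ht : (0:ℝ) < 1 + t ^ 2 := by positivity
      field_simp
    rw [hfun]
    have h1 : Filter.Tendsto (fun t : ℝ => 1 + t ^ 2) (Filter.comap abs Filter.atTop)
        Filter.atTop := by
      have habs : Filter.Tendsto (abs : ℝ → ℝ) (Filter.comap abs Filter.atTop)
          Filter.atTop := Filter.tendsto_comap
      have : Filter.Tendsto (fun t : ℝ => 1 + |t| ^ 2) (Filter.comap abs Filter.atTop)
          Filter.atTop :=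
        Filter.tendsto_atTop_add_const_left _ 1 (((Filter.tendsto_pow_atTop (two_ne_zero)).comp habs))
      simpa [Function.comp, sq_abs] using this
    have h2 : Filter.Tendsto (fun t : ℝ => τ ^ 2 + 8 * (1 + t ^ 2)⁻¹)
        (Filter.comap abs Filter.atTop) (nhds (τ ^ 2 + 8 * 0)) :=
      Filter.Tendsto.const_add _ (h1.inv_tendsto_atTop.const_mul 8)
    have := h2.div_const (τ ^ 2 + 8)
    simpa using this
end

section
/- For any a, b ∈ ℝ, ∫_ℝ Φ(a t + b) φ(t) dt = Φ(b / √(1 + a²)), where Φ and φ are the standard normal CDF and density. -/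
open MeasureTheory ProbabilityTheory

/-- Standard normal CDF Φ. -/
noncomputable def Phi (x : ℝ) : ℝ := ∫ t in Set.Iic x, gaussianPDFReal 0 1 t

open Real Set

/-- Translation formula for `Phi`. -/
lemma Phi_shift (c b : ℝ) :
    Phi (c + b) = ∫ s in Set.Iic b, gaussianPDFReal 0 1 (s + c) := by
  rw [Phi]
  have h := (measurePreserving_add_right (volume : Measure ℝ) c).setIntegral_preimage_emb
    (measurableEmbedding_addRight c) (gaussianPDFReal 0 1) (Set.Iic (c + b))
  rw [← h]
  congr 1
  ext s
  simp [add_comm c b]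

/-- Key convolution identity for gaussian densities. -/
lemma gaussian_conv (a s : ℝ) :
    ∫ t, gaussianPDFReal 0 1 (s + a * t) * gaussianPDFReal 0 1 t
      = gaussianPDFReal 0 ⟨1 + a ^ 2, by positivity⟩ s := by
  have hA : (0:ℝ) < 1 + a ^ 2 := by positivity
  have h2π : Real.sqrt (2 * π) * Real.sqrt (2 * π) = 2 * π :=
    Real.mul_self_sqrt (by positivity)
  have h1 : ∀ t : ℝ,
      gaussianPDFReal 0 1 (s + a * t) * gaussianPDFReal 0 1 t
        = ((2 * π)⁻¹ * rexp (- s ^ 2 / (2 * (1 + a ^ 2))))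
            * rexp (-((1 + a ^ 2) / 2) * ((t + a * s / (1 + a ^ 2))) ^ 2) := by
    intro t
    simp only [gaussianPDFReal, NNReal.coe_one, mul_one, sub_zero]
    rw [show (Real.sqrt (2*π))⁻¹ * rexp (-(s+a*t)^2/2) * ((Real.sqrt (2*π))⁻¹ * rexp (-t^2/2))
        = ((Real.sqrt (2*π))⁻¹*(Real.sqrt (2*π))⁻¹) * (rexp (-(s+a*t)^2/2) * rexp (-t^2/2)) by
          ring]
    rw [← Real.exp_add, ← mul_inv, h2π, mul_assoc, ← Real.exp_add]
    congr 1
    rw [Real.exp_eq_exp]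
    field_simp
    ring
  simp_rw [h1]
  rw [integral_const_mul,
    integral_add_right_eq_self (μ := volume)
      (fun t => rexp (-((1 + a ^ 2) / 2) * t ^ 2)) (a * s / (1 + a ^ 2)),
    integral_gaussian]
  simp only [gaussianPDFReal, NNReal.coe_mk, sub_zero]
  erw [NNReal.coe_mk]
  have hs1 : Real.sqrt (2 * π * (1 + a ^ 2)) = Real.sqrt (2 * π) * Real.sqrt (1 + a ^ 2) :=
    Real.sqrt_mul (by positivity) _
  have hs2 : Real.sqrt (π / ((1 + a ^ 2) / 2)) = Real.sqrt (2 * π) / Real.sqrt (1 + a ^ 2) := by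
    rw [show π / ((1 + a ^ 2) / 2) = (2 * π) / (1 + a ^ 2) by field_simp,
      Real.sqrt_div (by positivity)]
  rw [hs1, hs2]
  have hspos : (0:ℝ) < Real.sqrt (2 * π) := Real.sqrt_pos.mpr (by positivity)
  have hApos : (0:ℝ) < Real.sqrt (1 + a ^ 2) := Real.sqrt_pos.mpr hA
  have hconst : (2 * π)⁻¹ * (Real.sqrt (2 * π) / Real.sqrt (1 + a ^ 2))
      = (Real.sqrt (2 * π) * Real.sqrt (1 + a ^ 2))⁻¹ := by
    rw [mul_inv]
    have h2 : Real.sqrt 2 * Real.sqrt 2 = 2 := Real.mul_self_sqrt (by norm_num)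
    have hπ' : Real.sqrt π * Real.sqrt π = π := Real.mul_self_sqrt pi_pos.le
    field_simp
    linear_combination h2π
  calc (2 * π)⁻¹ * rexp (-s ^ 2 / (2 * (1 + a ^ 2)))
        * (Real.sqrt (2 * π) / Real.sqrt (1 + a ^ 2))
      = ((2 * π)⁻¹ * (Real.sqrt (2 * π) / Real.sqrt (1 + a ^ 2)))
          * rexp (-s ^ 2 / (2 * (1 + a ^ 2))) := by ring
    _ = (Real.sqrt (2 * π) * Real.sqrt (1 + a ^ 2))⁻¹
          * rexp (-s ^ 2 / (2 * (1 + a ^ 2))) := by rw [hconst]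

/-- Scaling formula: integral of the variance-`1+a²` density over `Iic b`. -/
lemma int_scaled (a b : ℝ) :
    ∫ s in Set.Iic b, gaussianPDFReal 0 ⟨1 + a ^ 2, by positivity⟩ s
      = Phi (b / Real.sqrt (1 + a ^ 2)) := by
  have hA : (0:ℝ) < 1 + a ^ 2 := by positivity
  set c := Real.sqrt (1 + a ^ 2) with hc
  have hcpos : 0 < c := Real.sqrt_pos.mpr hA
  have hc2 : c ^ 2 = 1 + a ^ 2 := Real.sq_sqrt hA.le
  have hpdf : ∀ s, gaussianPDFReal 0 (⟨1 + a ^ 2, by positivity⟩ : NNReal) s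
      = c⁻¹ * gaussianPDFReal 0 1 (c⁻¹ * s) := by
    intro s
    rw [gaussianPDFReal_inv_mul (μ := 0) (v := 1) hcpos.ne' s]
    have hv : (⟨c ^ 2, sq_nonneg _⟩ : NNReal) * 1 = (⟨1 + a ^ 2, by positivity⟩ : NNReal) := by
      ext
      simp [hc2]
    rw [mul_zero, abs_of_pos hcpos]
    erw [hv]
    field_simp
  simp_rw [hpdf]
  rw [integral_const_mul]
  have hscale : ∫ s in Set.Iic b, gaussianPDFReal 0 1 (c⁻¹ * s)
      = c * ∫ x in Set.Iic (b / c), gaussianPDFReal 0 1 x := by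
    have := MeasureTheory.Measure.setIntegral_comp_smul_of_pos (volume : Measure ℝ)
      (gaussianPDFReal 0 1) (Set.Iic b) (inv_pos.mpr hcpos)
    simp only [smul_eq_mul, Module.finrank_self, pow_one, inv_inv] at this
    rw [this]
    congr 1
    rw [LinearOrderedField.smul_Iic (inv_pos.mpr hcpos)]
    congr 1
    simp [smul_eq_mul, div_eq_inv_mul]
  rw [hscale, Phi, ← mul_assoc, inv_mul_cancel₀ hcpos.ne', one_mul]

/-- For all a, b ∈ ℝ: ∫ Φ(at + b) φ(t) dt = Φ(b/√(1+a²)). -/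
theorem stmt14 (a b : ℝ) :
    (∫ t, Phi (a * t + b) * gaussianPDFReal 0 1 t)
      = Phi (b / Real.sqrt (1 + a ^ 2)) := by
  have hmeas : Measurable (Function.uncurry fun (t s : ℝ) =>
      gaussianPDFReal 0 1 (s + a * t) * gaussianPDFReal 0 1 t) := by
    apply Measurable.mul
    · exact (measurable_gaussianPDFReal 0 1).comp (measurable_snd.add (measurable_fst.const_mul a))
    · exact (measurable_gaussianPDFReal 0 1).comp measurable_fst
  have hint : Integrable (Function.uncurry fun (t s : ℝ) =>
      gaussianPDFReal 0 1 (s + a * t) * gaussianPDFReal 0 1 t)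
      (volume.prod (volume.restrict (Set.Iic b))) := by
    rw [integrable_prod_iff hmeas.aestronglyMeasurable]
    constructor
    · refine Filter.Eventually.of_forall fun t => ?_
      exact (((integrable_gaussianPDFReal 0 1).comp_add_right (a * t)).mul_const
        (gaussianPDFReal 0 1 t)).restrict
    · apply Integrable.mono' (integrable_gaussianPDFReal 0 1)
      · exact (hmeas.norm.aestronglyMeasurable.integral_prod_right')
      · refine Filter.Eventually.of_forall fun t => ?_
        simp only [Function.uncurry_apply_pair]
        have hnn : ∀ s, 0 ≤ gaussianPDFReal 0 1 (s + a * t) * gaussianPDFReal 0 1 t :=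
          fun s => mul_nonneg (gaussianPDFReal_nonneg _ _ _) (gaussianPDFReal_nonneg _ _ _)
        have heq : (∫ s in Set.Iic b,
            ‖gaussianPDFReal 0 1 (s + a * t) * gaussianPDFReal 0 1 t‖)
            = ∫ s in Set.Iic b, gaussianPDFReal 0 1 (s + a * t) * gaussianPDFReal 0 1 t := by
          refine integral_congr_ae (Filter.Eventually.of_forall fun s => ?_)
          exact Real.norm_of_nonneg (hnn s)
        have hnn2 : 0 ≤ ∫ s in Set.Iic b,
            ‖gaussianPDFReal 0 1 (s + a * t) * gaussianPDFReal 0 1 t‖ := by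
          rw [heq]
          exact setIntegral_nonneg measurableSet_Iic (fun s _ => hnn s)
        rw [Real.norm_of_nonneg hnn2, heq]
        calc (∫ s in Set.Iic b, gaussianPDFReal 0 1 (s + a * t) * gaussianPDFReal 0 1 t)
            = (∫ s in Set.Iic b, gaussianPDFReal 0 1 (s + a * t)) * gaussianPDFReal 0 1 t :=
              integral_mul_const _ _
          _ ≤ (∫ s, gaussianPDFReal 0 1 (s + a * t)) * gaussianPDFReal 0 1 t := by
              apply mul_le_mul_of_nonneg_right _ (gaussianPDFReal_nonneg _ _ _)
              exact setIntegral_le_integral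
                ((integrable_gaussianPDFReal 0 1).comp_add_right (a * t))
                (Filter.Eventually.of_forall fun s => gaussianPDFReal_nonneg _ _ _)
          _ = gaussianPDFReal 0 1 t := by
              rw [integral_add_right_eq_self (μ := volume) (gaussianPDFReal 0 1) (a * t),
                integral_gaussianPDFReal_eq_one 0 one_ne_zero, one_mul]
  calc (∫ t, Phi (a * t + b) * gaussianPDFReal 0 1 t)
      = ∫ t, ∫ s in Set.Iic b, gaussianPDFReal 0 1 (s + a * t) * gaussianPDFReal 0 1 t := by
        refine integral_congr_ae (Filter.Eventually.of_forall fun t => ?_)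
        show Phi (a * t + b) * gaussianPDFReal 0 1 t
            = ∫ s in Set.Iic b, gaussianPDFReal 0 1 (s + a * t) * gaussianPDFReal 0 1 t
        rw [Phi_shift (a * t) b, ← integral_mul_const]
    _ = ∫ s in Set.Iic b, ∫ t, gaussianPDFReal 0 1 (s + a * t) * gaussianPDFReal 0 1 t :=
        integral_integral_swap hint
    _ = ∫ s in Set.Iic b, gaussianPDFReal 0 ⟨1 + a ^ 2, by positivity⟩ s := by
        refine integral_congr_ae (Filter.Eventually.of_forall fun s => ?_)
        exact gaussian_conv a s
    _ = Phi (b / Real.sqrt (1 + a ^ 2)) := int_scaled a b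
end

section
/- In the Γ-frailty model with marginal survivor function S_w(y) = (1 + exp(ϑ₁ + ϑ₂ log y + τ_x w)/η)^{-η}, the marginal hazard ratio between groups w=1 and w=0 at time y equals exp(τ_x) · (η + exp(ϑ₁ + ϑ₂ log y)) / (η + exp(ϑ₁ + ϑ₂ log y + τ_x)), which tends to 1 as y → ∞ (for ϑ₂ > 0) whenever τ_x ≠ 0; hence the marginal model does not have proportional hazards unless τ_x = 0. -/
lemma deriv_logS (η ϑ₁ ϑ₂ b : ℝ) (hη : 0 < η) {y : ℝ} (hy : 0 < y) :
    deriv (fun s => Real.log ((1 + Real.exp (ϑ₁ + ϑ₂ * Real.log s + b) / η) ^ (-η))) y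
    = -η * (Real.exp (ϑ₁ + ϑ₂ * Real.log y + b) * (ϑ₂ * y⁻¹) / η /
        (1 + Real.exp (ϑ₁ + ϑ₂ * Real.log y + b) / η)) := by
  have hpos : ∀ s : ℝ, 0 < 1 + Real.exp (ϑ₁ + ϑ₂ * Real.log s + b) / η := by
    intro s; positivity
  have hfe : (fun s => Real.log ((1 + Real.exp (ϑ₁ + ϑ₂ * Real.log s + b) / η) ^ (-η)))
      = fun s => -η * Real.log (1 + Real.exp (ϑ₁ + ϑ₂ * Real.log s + b) / η) := by
    funext s; rw [Real.log_rpow (hpos s)]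
  rw [hfe]
  have hA : HasDerivAt (fun s : ℝ => ϑ₁ + ϑ₂ * Real.log s + b) (ϑ₂ * y⁻¹) y :=
    (((Real.hasDerivAt_log hy.ne').const_mul ϑ₂).const_add ϑ₁).add_const b
  have hg : HasDerivAt (fun s : ℝ => 1 + Real.exp (ϑ₁ + ϑ₂ * Real.log s + b) / η)
      (Real.exp (ϑ₁ + ϑ₂ * Real.log y + b) * (ϑ₂ * y⁻¹) / η) y :=
    (hA.exp.div_const η).const_add 1
  exact ((hg.log (hpos y).ne').const_mul (-η)).deriv

/-- In the Γ-frailty model with marginal survivor function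
S_w(y) = (1 + exp(ϑ₁+ϑ₂ log y+τₓw)/η)^(-η), the marginal hazard ratio equals
exp(τₓ)·(η+exp(ϑ₁+ϑ₂ log y))/(η+exp(ϑ₁+ϑ₂ log y+τₓ)), tends to 1 as y → ∞
when τₓ ≠ 0, and hence the marginal model has no proportional hazards unless τₓ = 0. -/
theorem stmt16 (η ϑ₁ ϑ₂ τx : ℝ) (hη : 0 < η) (hϑ₂ : 0 < ϑ₂) :
    let S : ℝ → ℝ → ℝ := fun w y =>
      (1 + Real.exp (ϑ₁ + ϑ₂ * Real.log y + τx * w) / η) ^ (-η)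
    let haz : ℝ → ℝ → ℝ := fun w y => -(deriv (fun s => Real.log (S w s)) y)
    let hr : ℝ → ℝ := fun y => haz 1 y / haz 0 y
    (∀ y > 0, hr y = Real.exp τx * (η + Real.exp (ϑ₁ + ϑ₂ * Real.log y)) /
        (η + Real.exp (ϑ₁ + ϑ₂ * Real.log y + τx))) ∧
    (τx ≠ 0 → Filter.Tendsto hr Filter.atTop (nhds 1)) ∧
    (τx ≠ 0 → ¬ ∃ c, ∀ y > 0, hr y = c) := by
  intro S haz hr
  have hηne : η ≠ 0 := hη.ne'
  -- Part 1
  have part1 : ∀ y > 0, hr y = Real.exp τx * (η + Real.exp (ϑ₁ + ϑ₂ * Real.log y)) /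
      (η + Real.exp (ϑ₁ + ϑ₂ * Real.log y + τx)) := by
    intro y hy
    have h1 := deriv_logS η ϑ₁ ϑ₂ (τx * 1) hη hy
    have h0 := deriv_logS η ϑ₁ ϑ₂ (τx * 0) hη hy
    show -(deriv (fun s => Real.log (S 1 s)) y) / -(deriv (fun s => Real.log (S 0 s)) y) = _
    simp only [S] at *
    rw [h1, h0]
    have e0 := Real.exp_pos (ϑ₁ + ϑ₂ * Real.log y + τx * 0)
    have e1 := Real.exp_pos (ϑ₁ + ϑ₂ * Real.log y + τx * 1)
    have hrw : Real.exp (ϑ₁ + ϑ₂ * Real.log y + τx * 1)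
        = Real.exp (ϑ₁ + ϑ₂ * Real.log y) * Real.exp τx := by
      rw [← Real.exp_add]; ring_nf
    have hrw0 : Real.exp (ϑ₁ + ϑ₂ * Real.log y + τx * 0)
        = Real.exp (ϑ₁ + ϑ₂ * Real.log y) := by norm_num
    have hrw1 : Real.exp (ϑ₁ + ϑ₂ * Real.log y + τx)
        = Real.exp (ϑ₁ + ϑ₂ * Real.log y) * Real.exp τx := by
      rw [← Real.exp_add]
    rw [hrw, hrw0, hrw1]
    set E := Real.exp (ϑ₁ + ϑ₂ * Real.log y) with hE
    set T := Real.exp τx with hT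
    have hEpos : 0 < E := Real.exp_pos _
    have hTpos : 0 < T := Real.exp_pos _
    have d1 : (0:ℝ) < 1 + E * T / η := by positivity
    have d0 : (0:ℝ) < 1 + E / η := by positivity
    have d2 : (0:ℝ) < η + E * T := by positivity
    have d3 : (0:ℝ) < η + E := by positivity
    field_simp
  have hT : Filter.Tendsto hr Filter.atTop (nhds 1) := by
    set c := Real.exp τx with hc
    have hcpos : 0 < c := Real.exp_pos _
    have hEtop : Filter.Tendsto (fun y => Real.exp (ϑ₁ + ϑ₂ * Real.log y))
        Filter.atTop Filter.atTop := by
      apply Real.tendsto_exp_atTop.comp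
      apply Filter.tendsto_atTop_add_const_left
      exact (Real.tendsto_log_atTop).const_mul_atTop hϑ₂
    have hDtop : Filter.Tendsto (fun y => η + Real.exp (ϑ₁ + ϑ₂ * Real.log y) * c)
        Filter.atTop Filter.atTop :=
      Filter.tendsto_atTop_add_const_left _ _ (hEtop.atTop_mul_const hcpos)
    have hfrac : Filter.Tendsto
        (fun y => 1 + η * (c - 1) / (η + Real.exp (ϑ₁ + ϑ₂ * Real.log y) * c))
        Filter.atTop (nhds (1 + 0)) :=
      Filter.Tendsto.const_add 1 (Filter.Tendsto.div_atTop tendsto_const_nhds hDtop)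
    rw [add_zero] at hfrac
    refine Filter.Tendsto.congr' ?_ hfrac
    filter_upwards [Filter.eventually_gt_atTop (0:ℝ)] with y hy
    have := part1 y hy
    set E := Real.exp (ϑ₁ + ϑ₂ * Real.log y) with hE
    have hEpos : 0 < E := Real.exp_pos _
    have hd : (0:ℝ) < η + E * c := by positivity
    rw [this, Real.exp_add, ← hE, ← hc]
    field_simp
    ring
  refine ⟨part1, fun _ => hT, ?_⟩
  rintro hτ ⟨C, hC⟩
  have hC1 : C = 1 := by
    have hconst : Filter.Tendsto hr Filter.atTop (nhds C) := by
      refine Filter.Tendsto.congr' ?_ (tendsto_const_nhds (x := C))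
      filter_upwards [Filter.eventually_gt_atTop (0:ℝ)] with y hy
      exact (hC y hy).symm
    exact tendsto_nhds_unique hconst hT
  have h1 := hC 1 one_pos
  rw [part1 1 one_pos, hC1] at h1
  simp only [Real.log_one, mul_zero, add_zero] at h1
  set E := Real.exp ϑ₁ with hE
  have hEpos : 0 < E := Real.exp_pos _
  set T := Real.exp τx with hTd
  have hTpos : 0 < T := Real.exp_pos _
  have hrwT : Real.exp (ϑ₁ + τx) = E * T := by rw [← Real.exp_add]
  rw [hrwT] at h1
  have hd : (0:ℝ) < η + E * T := by positivity
  rw [div_eq_one_iff_eq hd.ne'] at h1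
  have hT1 : T = 1 := by
    have h2 : T * η = 1 * η := by nlinarith [h1]
    exact mul_right_cancel₀ hη.ne' h2
  rw [hTd] at hT1
  exact hτ (by rwa [Real.exp_eq_one_iff] at hT1)
end

section
/- In the bivariate Gaussian copula model of Lemma 2 with parameters Θ = (ϑ₁₁, ϑ₁₂, τ, ϑ₂₁, ϑ₂₂, λ), the Schur complement A - B D⁻¹ Bᵀ of the expected pair Fisher information H = H₀ + H₁ with respect to the nuisance block equals [[2, -2ϑ₁₁/ϑ₁₂, 0],[-2ϑ₁₁/ϑ₁₂, (4ϑ₁₁² + (λ²+1)τ² + 8)/(2ϑ₁₂²), -(λ²+1)τ/(2ϑ₁₂)],[0, -(λ²+1)τ/(2ϑ₁₂), (λ²+1)/2]], and its (3,3) entry of the inverse equals ((λ²+1)τ² + 8)/(4λ² + 4). -/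
set_option maxHeartbeats 2000000

open Matrix

/-- For the expected pair Fisher information H = H₀ + H₁ of the bivariate Gaussian
copula model of Lemma 2 (Appendix A.2), partitioned into the parameter block
(ϑ₁₁, ϑ₁₂, τ) and the nuisance block (ϑ₂₁, ϑ₂₂, λ) as H = [[A,B],[Bᵀ,D]],
the Schur complement A - BD⁻¹Bᵀ equals the stated 3×3 matrix M and the
(3,3) entry of M⁻¹ equals ((λ²+1)τ² + 8)/(4λ² + 4). -/
theorem stmt19 (ϑ₁₁ ϑ₁₂ τ ϑ₂₁ ϑ₂₂ l : ℝ) (h₁₂ : ϑ₁₂ ≠ 0) (h₂₂ : ϑ₂₂ ≠ 0) :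
    let A : Matrix (Fin 3) (Fin 3) ℝ :=
      !![2 * l ^ 2 + 2, -((2 * l ^ 2 + 2) * ϑ₁₁ / ϑ₁₂), 0;
         -((2 * l ^ 2 + 2) * ϑ₁₁ / ϑ₁₂),
           ((4 * l ^ 2 + 4) * ϑ₁₁ ^ 2 + (l ^ 2 + 1) * τ ^ 2 + 4 * l ^ 2 + 8) /
             (2 * ϑ₁₂ ^ 2),
           -((l ^ 2 + 1) * τ / (2 * ϑ₁₂));
         0, -((l ^ 2 + 1) * τ / (2 * ϑ₁₂)), (l ^ 2 + 1) / 2]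
    let B : Matrix (Fin 3) (Fin 3) ℝ :=
      !![2 * l, -(2 * l * ϑ₂₁ / ϑ₂₂), 0;
         -(2 * l * ϑ₁₁ / ϑ₁₂), (2 * l * ϑ₁₁ * ϑ₂₁ - 2 * l ^ 2) / (ϑ₁₂ * ϑ₂₂),
           2 * l / ϑ₁₂;
         0, 0, 0]
    let D : Matrix (Fin 3) (Fin 3) ℝ :=
      !![2, -(2 * ϑ₂₁ / ϑ₂₂), 0;
         -(2 * ϑ₂₁ / ϑ₂₂), (2 * ϑ₂₁ ^ 2 + 2 * l ^ 2 + 4) / ϑ₂₂ ^ 2, -(2 * l / ϑ₂₂);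
         0, -(2 * l / ϑ₂₂), 2]
    let M : Matrix (Fin 3) (Fin 3) ℝ :=
      !![2, -(2 * ϑ₁₁ / ϑ₁₂), 0;
         -(2 * ϑ₁₁ / ϑ₁₂),
           (4 * ϑ₁₁ ^ 2 + (l ^ 2 + 1) * τ ^ 2 + 8) / (2 * ϑ₁₂ ^ 2),
           -((l ^ 2 + 1) * τ / (2 * ϑ₁₂));
         0, -((l ^ 2 + 1) * τ / (2 * ϑ₁₂)), (l ^ 2 + 1) / 2]
    A - B * D⁻¹ * Bᵀ = M ∧
    M⁻¹ 2 2 = ((l ^ 2 + 1) * τ ^ 2 + 8) / (4 * l ^ 2 + 4) := by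
  intro A B D M
  have hq : l ^ 2 + 1 ≠ 0 := by positivity
  have hD : D⁻¹ =
      !![(ϑ₂₁ ^ 2 + 2) / 4, ϑ₂₁ * ϑ₂₂ / 4, l * ϑ₂₁ / 4;
         ϑ₂₁ * ϑ₂₂ / 4, ϑ₂₂ ^ 2 / 4, l * ϑ₂₂ / 4;
         l * ϑ₂₁ / 4, l * ϑ₂₂ / 4, (l ^ 2 + 2) / 4] := by
    apply inv_eq_right_inv
    ext i j
    fin_cases i <;> fin_cases j <;>
      simp [D, Matrix.mul_apply, Fin.sum_univ_three] <;>
      field_simp <;> ring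
  have hM : M⁻¹ =
      !![(ϑ₁₁ ^ 2 + 2) / 4, ϑ₁₁ * ϑ₁₂ / 4, ϑ₁₁ * τ / 4;
         ϑ₁₁ * ϑ₁₂ / 4, ϑ₁₂ ^ 2 / 4, ϑ₁₂ * τ / 4;
         ϑ₁₁ * τ / 4, ϑ₁₂ * τ / 4,
           ((l ^ 2 + 1) * τ ^ 2 + 8) / (4 * (l ^ 2 + 1))] := by
    apply inv_eq_right_inv
    ext i j
    fin_cases i <;> fin_cases j <;>
      simp [M, Matrix.mul_apply, Fin.sum_univ_three] <;>
      field_simp <;> ring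
  constructor
  · have hBt : Bᵀ =
        !![2 * l, -(2 * l * ϑ₁₁ / ϑ₁₂), 0;
           -(2 * l * ϑ₂₁ / ϑ₂₂), (2 * l * ϑ₁₁ * ϑ₂₁ - 2 * l ^ 2) / (ϑ₁₂ * ϑ₂₂), 0;
           0, 2 * l / ϑ₁₂, 0] := by
      ext i j
      fin_cases i <;> fin_cases j <;> simp [B, Matrix.vecHead, Matrix.vecTail]
    rw [hD, hBt]
    ext i j
    fin_cases i <;> fin_cases j <;>
      simp [A, B, M, Matrix.mul_apply, Fin.sum_univ_three, Matrix.vecHead, Matrix.vecTail] <;>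
      (try field_simp) <;> (try ring)
  · rw [hM]
    change ((l ^ 2 + 1) * τ ^ 2 + 8) / (4 * (l ^ 2 + 1)) = _
    ring
end
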